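/- arXiv:2311.15554 — 2 statements merged into one kernel-verified Lean document; each statement's English description precedes it below -/
import Mathlib

section
/- For all integers d ≥ 2 and n ≥ 0, Σ_{k=0}^{n} (⌊(n−k)/2⌋ + 1) · (C(k+d−1, k) − C(k+d−3, k−2)) = C(n+d, n), where binomial coefficients with a negative lower index are interpreted as 0. -/
open MeasureTheory MvPolynomial

noncomputable section

/-- Pochhammer symbol `(a)_n` for a real number `a`. -/
def pochR (a : ℝ) (n : ℕ) : ℝ := ∏ k ∈ Finset.range n, (a + k)

/-- The Jacobi polynomial `P_n^{(a,b)}`, as a real function, defined through its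
hypergeometric expansion. -/
def jacobiP (a b : ℝ) (n : ℕ) (t : ℝ) : ℝ :=
  pochR (a + 1) n / (n.factorial : ℝ) *
    ∑ i ∈ Finset.range (n + 1),
      pochR (-(n : ℝ)) i * pochR ((n : ℝ) + a + b + 1) i /
          (pochR (a + 1) i * (i.factorial : ℝ)) * (((1 : ℝ) - t) / 2) ^ i

/-- The Gegenbauer polynomial `C_n^λ`, via its standard expression in terms of Jacobi
polynomials, normalized by `C_n^λ(1) = (2λ)_n / n!`. -/
def gegenC (lam : ℝ) (n : ℕ) (t : ℝ) : ℝ :=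
  pochR (2 * lam) n / pochR (lam + 1 / 2) n * jacobiP (lam - 1 / 2) (lam - 1 / 2) n t

/-- The generalized Gegenbauer polynomial `C_n^{(λ,μ)}`. -/
def genGegen (lam mu : ℝ) (n : ℕ) (t : ℝ) : ℝ :=
  if n % 2 = 0 then
    pochR (lam + mu) (n / 2) / pochR (mu + 1 / 2) (n / 2) *
      jacobiP (lam - 1 / 2) (mu - 1 / 2) (n / 2) (2 * t ^ 2 - 1)
  else
    pochR (lam + mu) (n / 2 + 1) / pochR (mu + 1 / 2) (n / 2 + 1) * t *
      jacobiP (lam - 1 / 2) (mu + 1 / 2) (n / 2) (2 * t ^ 2 - 1)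

/-- Norm square `h_n^{(a,b)}` of the Jacobi polynomial `P_n^{(a,b)}` with respect to the
normalized Jacobi weight on `[-1,1]`. -/
def hJac (a b : ℝ) (n : ℕ) : ℝ :=
  pochR (a + 1) n * pochR (b + 1) n * (a + b + n + 1) /
    ((n.factorial : ℝ) * pochR (a + b + 2) n * (a + b + 2 * n + 1))

/-- Norm square `𝗁_n^{(λ,μ)}` of the generalized Gegenbauer polynomial with respect to the
normalized weight proportional to `|t|^{2μ} (1-t²)^{λ-1/2}` on `[-1,1]`. -/
def hGG (lam mu : ℝ) (n : ℕ) : ℝ :=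
  if n % 2 = 0 then
    pochR (lam + 1 / 2) (n / 2) * pochR (lam + mu) (n / 2) * (lam + mu) /
      (((n / 2).factorial : ℝ) * pochR (mu + 1 / 2) (n / 2) * (lam + mu + n))
  else
    pochR (lam + 1 / 2) (n / 2) * pochR (lam + mu) (n / 2 + 1) * (lam + mu) /
      (((n / 2).factorial : ℝ) * pochR (mu + 1 / 2) (n / 2 + 1) * (lam + mu + n))

/-- Square of the euclidean norm on `Fin d → ℝ`. -/
def sqn {d : ℕ} (x : Fin d → ℝ) : ℝ := ∑ i, x i ^ 2

/-- Euclidean norm on `Fin d → ℝ`. -/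
def euclNorm {d : ℕ} (x : Fin d → ℝ) : ℝ := Real.sqrt (sqn x)

/-- The (possibly non-normalized) weighted inner product `∫_D f g W`. -/
def wip {m : ℕ} (W : (Fin m → ℝ) → ℝ) (D : Set (Fin m → ℝ)) (f g : (Fin m → ℝ) → ℝ) : ℝ :=
  ∫ x in D, f x * g x * W x

/-- `V_n(W, D)`: polynomials of total degree at most `n` that are orthogonal to all
polynomials of total degree `< n` with respect to the weight `W` on `D`. -/
def Vsp {m : ℕ} (n : ℕ) (W : (Fin m → ℝ) → ℝ) (D : Set (Fin m → ℝ)) :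
    Set (MvPolynomial (Fin m) ℝ) :=
  {p | p.totalDegree ≤ n ∧ ∀ q : MvPolynomial (Fin m) ℝ, q.totalDegree < n →
    wip W D (fun x => eval x p) (fun x => eval x q) = 0}

/-- The family `v`, restricted to the index set `idx`, is an orthogonal basis of `V`
with respect to the weight `W` on `D`. -/
def IsOrthoBasisFor {m : ℕ} {ι : Type*} (idx : Set ι) (v : ι → MvPolynomial (Fin m) ℝ)
    (V : Set (MvPolynomial (Fin m) ℝ)) (W : (Fin m → ℝ) → ℝ) (D : Set (Fin m → ℝ)) : Prop :=
  (∀ i ∈ idx, v i ∈ V) ∧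
    (∀ i ∈ idx, ∀ j ∈ idx, i ≠ j →
      wip W D (fun x => eval x (v i)) (fun x => eval x (v j)) = 0) ∧
    ∀ p ∈ V, p ∈ Submodule.span ℝ (v '' idx)

/-- The family `v`, restricted to the index set `idx`, is an orthonormal basis of `V`
with respect to the weight `W` on `D`. -/
def IsONBasisFor {m : ℕ} {ι : Type*} [DecidableEq ι] (idx : Set ι)
    (v : ι → MvPolynomial (Fin m) ℝ)
    (V : Set (MvPolynomial (Fin m) ℝ)) (W : (Fin m → ℝ) → ℝ) (D : Set (Fin m → ℝ)) : Prop :=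
  (∀ i ∈ idx, v i ∈ V) ∧
    (∀ i ∈ idx, ∀ j ∈ idx,
      wip W D (fun x => eval x (v i)) (fun x => eval x (v j)) = if i = j then 1 else 0) ∧
    ∀ p ∈ V, p ∈ Submodule.span ℝ (v '' idx)

/-- Bivariate members of `V_n(W,D)` that are even in the first variable. -/
def VspE2 (n : ℕ) (W : (Fin 2 → ℝ) → ℝ) (D : Set (Fin 2 → ℝ)) :
    Set (MvPolynomial (Fin 2) ℝ) :=
  {p | p ∈ Vsp n W D ∧ ∀ s t : ℝ, eval ![-s, t] p = eval ![s, t] p}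

/-- Bivariate members of `V_n(W,D)` that are odd in the first variable. -/
def VspO2 (n : ℕ) (W : (Fin 2 → ℝ) → ℝ) (D : Set (Fin 2 → ℝ)) :
    Set (MvPolynomial (Fin 2) ℝ) :=
  {p | p ∈ Vsp n W D ∧ ∀ s t : ℝ, eval ![-s, t] p = -eval ![s, t] p}

/-- Formal Laplacian of a polynomial. -/
def mvLap {d : ℕ} (p : MvPolynomial (Fin d) ℝ) : MvPolynomial (Fin d) ℝ :=
  ∑ i : Fin d, pderiv i (pderiv i p)

/-- Dimension of the space of spherical harmonics of degree `k` in `d` variables,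
`C(k+d-1, k) - C(k+d-3, k-2)`, the second binomial being `0` for `k < 2`. -/
def dimSH (d k : ℕ) : ℕ :=
  (k + d - 1).choose k - (if 2 ≤ k then (k + d - 3).choose (k - 2) else 0)

/-- Surface measure on the unit sphere of `ℝ^d`. -/
def sphereMeasure (d : ℕ) : Measure (Metric.sphere (0 : EuclideanSpace ℝ (Fin d)) 1) :=
  (volume : Measure (EuclideanSpace ℝ (Fin d))).toSphere

/-- `Y` is an orthonormal basis of the space `H_k^d` of spherical harmonics of degree `k`
in `d` variables, each harmonic being identified with its homogeneous harmonic extension. -/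
def IsONBHarm (d k : ℕ) (Y : Fin (dimSH d k) → MvPolynomial (Fin d) ℝ) : Prop :=
  (∀ ℓ, (Y ℓ).IsHomogeneous k ∧ mvLap (Y ℓ) = 0) ∧
    ∀ ℓ ℓ', (∫ ξ : Metric.sphere (0 : EuclideanSpace ℝ (Fin d)) 1,
        eval (WithLp.equiv 2 (Fin d → ℝ) ξ.1) (Y ℓ) *
          eval (WithLp.equiv 2 (Fin d → ℝ) ξ.1) (Y ℓ') ∂(sphereMeasure d)) =
      if ℓ = ℓ' then 1 else 0

/-- First `d` coordinates of a point of `ℝ^{d+1}`. -/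
def xpart {d : ℕ} (z : Fin (d + 1) → ℝ) : Fin d → ℝ := fun i => z i.castSucc

/-- Last coordinate of a point of `ℝ^{d+1}`. -/
def tpart {d : ℕ} (z : Fin (d + 1) → ℝ) : ℝ := z (Fin.last d)

/-- Evaluation of a polynomial in `d+1` variables at the point `(x, t)`. -/
def pev {d : ℕ} (q : MvPolynomial (Fin (d + 1)) ℝ) (x : Fin d → ℝ) (t : ℝ) : ℝ :=
  eval (Fin.snoc x t) q

/-- Members of `V_n(W,D)` in `d+1` variables that are even in the last variable `t`. -/
def VspEt {d : ℕ} (n : ℕ) (W : (Fin (d + 1) → ℝ) → ℝ) (D : Set (Fin (d + 1) → ℝ)) :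
    Set (MvPolynomial (Fin (d + 1)) ℝ) :=
  {p | p ∈ Vsp n W D ∧ ∀ (x : Fin d → ℝ) (t : ℝ), pev p x (-t) = pev p x t}

/-- Members of `V_n(W,D)` in `d+1` variables that are odd in the last variable `t`. -/
def VspOt {d : ℕ} (n : ℕ) (W : (Fin (d + 1) → ℝ) → ℝ) (D : Set (Fin (d + 1) → ℝ)) :
    Set (MvPolynomial (Fin (d + 1)) ℝ) :=
  {p | p ∈ Vsp n W D ∧ ∀ (x : Fin d → ℝ) (t : ℝ), pev p x (-t) = -pev p x t}

/-- Substitution `(u, v) ↦ (u², v²)` in a bivariate polynomial. -/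
def sub2 (p : MvPolynomial (Fin 2) ℝ) : MvPolynomial (Fin 2) ℝ :=
  bind₁ (fun i => (X i) ^ 2) p

/-- The triangle `{(u,v) : u ≥ 0, v ≥ 0, u + v ≤ 1}`. -/
def triSet : Set (Fin 2 → ℝ) := {p | 0 ≤ p 0 ∧ 0 ≤ p 1 ∧ p 0 + p 1 ≤ 1}

/-- The Jacobi weight `u^a v^b (1-u-v)^c` on the triangle. -/
def Wtri (a b c : ℝ) : (Fin 2 → ℝ) → ℝ := fun p => p 0 ^ a * p 1 ^ b * (1 - p 0 - p 1) ^ c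

/-- The four-parameter triangle orthogonal polynomial `T_{j,m}^{a,b,c,e}`, as a function
defined away from `v = 1`. -/
def Tfun4 (a b c e : ℝ) (j m : ℕ) (u v : ℝ) : ℝ :=
  jacobiP (2 * j + a + c + e + 1) b (m - j) (2 * v - 1) * (1 - v) ^ j *
    jacobiP a c j (1 - 2 * u / (1 - v))

/-- The triangle orthogonal polynomial `T_{j,m}^{a,b,c}`, as a function defined away
from `v = 1`. -/
def Tfun (a b c : ℝ) (j m : ℕ) (u v : ℝ) : ℝ :=
  jacobiP (2 * j + a + c + 1) b (m - j) (2 * v - 1) * (1 - v) ^ j *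
    jacobiP a c j (1 - 2 * u / (1 - v))

/-- The triangle orthogonal polynomial `S_{j,m}^{a,b,c}`, as a function defined away
from `u = 1`. -/
def Sfun (a b c : ℝ) (j m : ℕ) (u v : ℝ) : ℝ :=
  jacobiP (2 * j + b + c + 1) a (m - j) (2 * u - 1) * (1 - u) ^ j *
    jacobiP c b j (2 * v / (1 - u) - 1)

/-- The triangle orthogonal polynomial `R_{j,m}^{a,b,c}`, as a function defined away
from `u + v = 0`. -/
def Rfun (a b c : ℝ) (j m : ℕ) (u v : ℝ) : ℝ :=
  jacobiP (2 * j + a + b + 1) c (m - j) (1 - 2 * u - 2 * v) * (u + v) ^ j *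
    jacobiP b a j ((u - v) / (u + v))

def Afun (u v : ℝ) : ℝ := u * v + Real.sqrt (1 - u ^ 2) * Real.sqrt (1 - v ^ 2)

def Bfun (u v : ℝ) : ℝ := u * v - Real.sqrt (1 - u ^ 2) * Real.sqrt (1 - v ^ 2)

/-- The polynomials `P_{j,N}^{(a,b)}` on the square, as functions on `[-1,1]²`. -/
def PjN (a b : ℝ) (j N : ℕ) (u v : ℝ) : ℝ :=
  if N % 2 = 0 then
    jacobiP a b (N / 2) (Afun u v) * jacobiP a b j (Bfun u v) +
      jacobiP a b j (Afun u v) * jacobiP a b (N / 2) (Bfun u v)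
  else
    (u + v) * (jacobiP a (b + 1) (N / 2) (Afun u v) * jacobiP a (b + 1) j (Bfun u v) +
      jacobiP a (b + 1) j (Afun u v) * jacobiP a (b + 1) (N / 2) (Bfun u v))

/-- Reflection of the last coordinate of a point of `ℝ^{d+1}`. -/
def tneg {d : ℕ} (z : Fin (d + 1) → ℝ) : Fin (d + 1) → ℝ :=
  Function.update z (Fin.last d) (-(z (Fin.last d)))

/-- The operator `⟨x, ∇_x⟩` acting on polynomials in the variables `(x, t)`. -/
def xdel {d : ℕ} (p : MvPolynomial (Fin (d + 1)) ℝ) : MvPolynomial (Fin (d + 1)) ℝ :=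
  ∑ i : Fin d, X i.castSucc * pderiv i.castSucc p

/-- The Laplacian `Δ_x` in the `x` variables, acting on polynomials in `(x, t)`. -/
def lapx {d : ℕ} (p : MvPolynomial (Fin (d + 1)) ℝ) : MvPolynomial (Fin (d + 1)) ℝ :=
  ∑ i : Fin d, pderiv i.castSucc (pderiv i.castSucc p)

/-- The derivative `∂_t` in the last variable, acting on polynomials in `(x, t)`. -/
def dtP {d : ℕ} (p : MvPolynomial (Fin (d + 1)) ℝ) : MvPolynomial (Fin (d + 1)) ℝ :=
  pderiv (Fin.last d) p

lemma dimSH_sum (e n : ℕ) :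
    ∑ k ∈ Finset.range (n + 1), dimSH (e + 2) k =
      (n + e + 1).choose (e + 1) + (n + e).choose (e + 1) := by
  induction n with
  | zero => simp [dimSH]
  | succ n ih =>
    rw [Finset.sum_range_succ, ih]
    rcases n with _ | j
    · have h0 : dimSH (e + 2) (0 + 1) = e + 2 := by simp [dimSH]
      have a1 : (0 + e + 1).choose (e + 1) = 1 := by simp
      have a2 : (0 + e).choose (e + 1) = Nat.choose e (e + 1) := by norm_num
      have a2' : Nat.choose e (e + 1) = 0 := Nat.choose_eq_zero_of_lt (by omega)
      have a3 : (0 + 1 + e + 1).choose (e + 1) = e + 2 := by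
        rw [show 0 + 1 + e + 1 = e + 1 + 1 from by omega, Nat.choose_succ_self_right]
      have a4 : (0 + 1 + e).choose (e + 1) = 1 := by
        rw [show 0 + 1 + e = e + 1 from by omega]; simp
      omega
    · have h1 : (j + e + 3).choose (j + 2) = (j + e + 3).choose (e + 1) := by
        rw [← Nat.choose_symm (by omega : j + 2 ≤ j + e + 3)]
        congr 1; omega
      have h2 : (j + e + 1).choose j = (j + e + 1).choose (e + 1) := by
        rw [← Nat.choose_symm (by omega : j ≤ j + e + 1)]
        congr 1; omega
      have hdim : dimSH (e + 2) (j + 2) =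
          (j + e + 3).choose (e + 1) - (j + e + 1).choose (e + 1) := by
        unfold dimSH
        rw [if_pos (by omega)]
        have e1 : j + 2 + (e + 2) - 1 = j + e + 3 := by omega
        have e2 : j + 2 + (e + 2) - 3 = j + e + 1 := by omega
        have e3 : j + 2 - 2 = j := by omega
        rw [e1, e2, e3, h1, h2]
      rw [hdim]
      have hle : (j + e + 1).choose (e + 1) ≤ (j + e + 3).choose (e + 1) :=
        Nat.choose_le_choose (e + 1) (by omega)
      have e4 : j + 1 + 1 + e + 1 = j + e + 3 := by omega
      have e5 : j + 1 + 1 + e = j + e + 2 := by omega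
      have e6 : j + 1 + e + 1 = j + e + 2 := by omega
      have e7 : j + 1 + e = j + e + 1 := by omega
      rw [e4, e5, e6, e7]
      omega

/-- `Σ_{k=0}^{n} (⌊(n−k)/2⌋ + 1) · dim H_k^d = C(n+d, n)`. -/
theorem stmt1 (d n : ℕ) (hd : 2 ≤ d) :
    ∑ k ∈ Finset.range (n + 1), ((n - k) / 2 + 1) * dimSH d k = (n + d).choose n := by
  obtain ⟨e, rfl⟩ : ∃ e, d = e + 2 := ⟨d - 2, by omega⟩
  clear hd
  induction n using Nat.strong_induction_on with
  | _ n ih =>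
    match n with
    | 0 => simp [dimSH]
    | 1 =>
      have h0 : dimSH (e + 2) 0 = 1 := by simp [dimSH]
      have h1 : dimSH (e + 2) 1 = e + 2 := by simp [dimSH]
      have h2 : (1 + (e + 2)).choose 1 = e + 3 := by
        rw [Nat.choose_one_right]; omega
      rw [Finset.sum_range_succ, Finset.sum_range_succ, Finset.sum_range_zero, h0, h1]
      omega
    | (m + 2) =>
      have key : ∑ k ∈ Finset.range (m + 1), ((m + 2 - k) / 2 + 1) * dimSH (e + 2) k
          = ∑ k ∈ Finset.range (m + 1),
              (((m - k) / 2 + 1) * dimSH (e + 2) k + dimSH (e + 2) k) := by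
        refine Finset.sum_congr rfl fun k hk => ?_
        have hk' : k ≤ m := by simpa [Nat.lt_succ_iff] using hk
        have : (m + 2 - k) / 2 + 1 = ((m - k) / 2 + 1) + 1 := by omega
        rw [this, add_mul, one_mul]
      have hDD : (∑ k ∈ Finset.range (m + 1), dimSH (e + 2) k)
            + dimSH (e + 2) (m + 1) + dimSH (e + 2) (m + 2)
          = (m + 2 + e + 1).choose (e + 1) + (m + 2 + e).choose (e + 1) := by
        rw [← Finset.sum_range_succ, ← Finset.sum_range_succ, dimSH_sum]
      have hsym1 : (m + e + 3).choose (m + 2) = (m + e + 3).choose (e + 1) := by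
        rw [← Nat.choose_symm (by omega : m + 2 ≤ m + e + 3)]; congr 1; omega
      have hsym2 : (m + e + 2).choose (m + 1) = (m + e + 2).choose (e + 1) := by
        rw [← Nat.choose_symm (by omega : m + 1 ≤ m + e + 2)]; congr 1; omega
      have pascal : (m + 2 + (e + 2)).choose (m + 2)
          = (m + (e + 2)).choose m
            + ((m + e + 3).choose (e + 1) + (m + e + 2).choose (e + 1)) := by
        have p1 : (m + e + 4).choose (m + 2)
            = (m + e + 3).choose (m + 1) + (m + e + 3).choose (m + 2) :=
          Nat.choose_succ_succ _ _
        have p2 : (m + e + 3).choose (m + 1)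
            = (m + e + 2).choose m + (m + e + 2).choose (m + 1) :=
          Nat.choose_succ_succ _ _
        have q1 : m + 2 + (e + 2) = m + e + 4 := by omega
        have q2 : m + (e + 2) = m + e + 2 := by omega
        rw [q1, q2]
        omega
      rw [Finset.sum_range_succ, Finset.sum_range_succ, key, Finset.sum_add_distrib,
        ih m (by omega), pascal]
      have w1 : (m + 2 - (m + 1)) / 2 + 1 = 1 := by omega
      have w2 : (m + 2 - (m + 2)) / 2 + 1 = 1 := by omega
      rw [w1, w2, one_mul, one_mul]
      have q3 : m + 2 + e + 1 = m + e + 3 := by omega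
      have q4 : m + 2 + e = m + e + 2 := by omega
      rw [q3, q4] at hDD
      omega
end
end

section
/- Let Ω ⊆ ℝ² and w be fully symmetric, w with finite moments. For each choice of signs let {P_{j,m}(w_{ε,δ}) : 0 ≤ j ≤ m} be an orthonormal basis of V_m(w_{ε,δ}, √Ω) with respect to ⟨f,g⟩ = ∫_{√Ω} f g w_{ε,δ}. Define P_j^{2m}(w; u,v) = P_{j,m}(w_{−1/2,−1/2}; u², v²) and P_j^{2m+1}(w; u,v) = v · P_{j,m}(w_{−1/2,1/2}; u², v²) for 0 ≤ j ≤ m, and Q_j^{2m}(w; u,v) = u v · P_{j,m−1}(w_{1/2,1/2}; u², v²) for 0 ≤ j ≤ m−1 and Q_j^{2m+1}(w; u,v) = u · P_{j,m}(w_{1/2,−1/2}; u², v²) for 0 ≤ j ≤ m. Then {P_j^{n}(w) : 0 ≤ j ≤ ⌊n/2⌋} is an orthonormal basis of V_n^E(w, Ω) and {Q_j^{n}(w) : 0 ≤ j ≤ ⌊(n−1)/2⌋ if n even, 0 ≤ j ≤ ⌊n/2⌋ if n odd} is an orthonormal basis of V_n^O(w, Ω), both with respect to ⟨f,g⟩ =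 ∫_Ω f g w. -/
open MeasureTheory MvPolynomial

noncomputable section

/-!
The substitution `u = x²` on the open positive quadrant, together with the invariance of `Ω` and
`w` under the two coordinate reflections, gives for `a, b ∈ {0, 1}`
`∫_{√Ω} F G w_{a-1/2, b-1/2} = ∫_Ω (x₀ᵃ x₁ᵇ F(x²)) (x₀ᵃ x₁ᵇ G(x²)) w`,
so `F ↦ x₀ᵃ x₁ᵇ F(x²)` is an isometry. A polynomial splits according to the parities of its
degrees in `x₀` and in `x₁`; parts of different parities are orthogonal on `Ω`, their product being
odd under a reflection, and the part of parities `(a, b)` has the form `x₀ᵃ x₁ᵇ F(x²)`. Testing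
orthogonality against that part only shows that `V_m(w_{a-1/2, b-1/2}, √Ω)` is mapped into
`V_{2m+a+b}(w, Ω)`.

Conversely, let `p ∈ V_n(w, Ω)` have parity `a` in `x₀`. Its part of the other parity `b' = 1 - b`
in `x₁` is `x₀ᵃ x₁^b' G(x²)`, of degree `< n` by parity, with `G ∈ V_k(w_{a-1/2, b'-1/2}, √Ω)` for
`k = deg G`. It thus lies in the span of the images of an orthonormal basis of that space while
being orthogonal to all of them, so it vanishes; since `w` need not be positive, being orthogonal
to itself would not be enough. The remaining part of `p` is the image of an element of
`V_m(w_{a-1/2, b-1/2}, √Ω)`.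
-/

lemma volume_coord_eq_zero {σ : Type*} [Fintype σ] (i : σ) :
    volume {x : σ → ℝ | x i = 0} = 0 := by
  rw [volume_pi]
  exact Measure.pi_hyperplane _ i 0

section Reflection

variable {σ : Type*} [DecidableEq σ]

def reflect (i : σ) (x : σ → ℝ) : σ → ℝ := Function.update x i (-x i)

@[simp] lemma reflect_apply_self (i : σ) (x : σ → ℝ) : reflect i x i = -x i := by
  simp [reflect]

@[simp] lemma reflect_apply_of_ne {i j : σ} (h : j ≠ i) (x : σ → ℝ) : reflect i x j = x j := by
  simp [reflect, h]

@[simp] lemma reflect_reflect (i : σ) (x : σ → ℝ) : reflect i (reflect i x) = x := by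
  simp [reflect]

lemma reflect_sq (i : σ) (x : σ → ℝ) : (fun j => reflect i x j ^ 2) = fun j => x j ^ 2 := by
  funext j
  by_cases hj : j = i
  · subst hj; simp
  · simp [hj]

variable [Fintype σ]

lemma measurePreserving_reflect (i : σ) :
    MeasurePreserving (reflect i) (volume : Measure (σ → ℝ)) volume := by
  have h := measurePreserving_pi (fun _ : σ => (volume : Measure ℝ)) (fun _ => volume)
    (f := fun j => if j = i then Neg.neg else id)
    (fun j => by split_ifs; exacts [Measure.measurePreserving_neg _, MeasurePreserving.id _])
  have e : reflect i = fun x j => (if j = i then Neg.neg else id) (x j) := by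
    funext x j
    by_cases hj : j = i <;> simp [reflect, hj]
  rw [e, volume_pi]
  exact h

def reflectEquiv (i : σ) : (σ → ℝ) ≃ᵐ (σ → ℝ) where
  toFun := reflect i
  invFun := reflect i
  left_inv := reflect_reflect i
  right_inv := reflect_reflect i
  measurable_toFun := (measurePreserving_reflect i).measurable
  measurable_invFun := (measurePreserving_reflect i).measurable

lemma setIntegral_preimage_reflect (i : σ) (D : Set (σ → ℝ)) (F : (σ → ℝ) → ℝ) :
    ∫ x in reflect i ⁻¹' D, F (reflect i x) = ∫ x in D, F x :=
  (measurePreserving_reflect i).setIntegral_preimage_emb (reflectEquiv i).measurableEmbedding F D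

lemma setIntegral_comp_reflect {D : Set (σ → ℝ)} (i : σ) (hD : ∀ x ∈ D, reflect i x ∈ D)
    (F : (σ → ℝ) → ℝ) : ∫ x in D, F (reflect i x) = ∫ x in D, F x := by
  have hpre : reflect i ⁻¹' D = D :=
    Set.Subset.antisymm (fun x hx => by simpa using hD _ hx) (fun x hx => hD x hx)
  rw [← setIntegral_preimage_reflect i D F, hpre]

lemma setIntegral_eq_zero_of_reflect {D : Set (σ → ℝ)} (i : σ) (hD : ∀ x ∈ D, reflect i x ∈ D)
    {F : (σ → ℝ) → ℝ} (hF : ∀ x, F (reflect i x) = -F x) : ∫ x in D, F x = 0 := by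
  have h := setIntegral_comp_reflect i hD F
  simp only [hF, integral_neg] at h
  linarith

lemma setIntegral_eq_two_mul_of_reflect {D : Set (σ → ℝ)} (i : σ)
    (hD : ∀ x ∈ D, reflect i x ∈ D) {F : (σ → ℝ) → ℝ} (hFi : IntegrableOn F D)
    (hF : ∀ x, F (reflect i x) = F x) :
    ∫ x in D, F x = 2 * ∫ x in D ∩ {x | 0 < x i}, F x := by
  set P : Set (σ → ℝ) := {x | 0 < x i}
  have hsub : reflect i ⁻¹' (D ∩ P) ⊆ D \ P := fun x ⟨hxD, hx⟩ =>
    ⟨by simpa using hD _ hxD, by simp_all [P]; linarith⟩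
  have hnull : (D \ P) \ (reflect i ⁻¹' (D ∩ P)) ⊆ {x | x i = 0} := by
    rintro x ⟨⟨hxD, hx⟩, hx'⟩
    simp_all [P]
    linarith
  have hneg : (D \ P : Set (σ → ℝ)) =ᵐ[volume] reflect i ⁻¹' (D ∩ P) := ae_eq_set.2
    ⟨measure_mono_null hnull (volume_coord_eq_zero i), by rw [Set.sdiff_eq_empty.2 hsub]; simp⟩
  have hrefl : ∫ x in D \ P, F x = ∫ x in D ∩ P, F x := by
    rw [setIntegral_congr_set hneg, ← setIntegral_preimage_reflect i (D ∩ P)]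
    simp only [hF]
  rw [← integral_inter_add_sdiff (measurableSet_lt measurable_const (measurable_pi_apply i)) hFi,
    hrefl, two_mul]

end Reflection

section Square

variable {ι : Type*} [Fintype ι] [DecidableEq ι]

lemma hasFDerivAt_sq_pi (x : ι → ℝ) :
    HasFDerivAt (fun y : ι → ℝ => fun i => y i ^ 2)
      (LinearMap.toContinuousLinearMap (Matrix.toLin' (Matrix.diagonal fun i => 2 * x i))) x := by
  rw [hasFDerivAt_pi']
  intro i
  refine ((hasDerivAt_pow 2 (x i)).comp_hasFDerivAt x
    (hasFDerivAt_apply (𝕜 := ℝ) (F' := fun _ => ℝ) i x)).congr_fderiv ?_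
  ext y
  simp [Matrix.mulVec_diagonal]

lemma setIntegral_image_sq {A : Set (ι → ℝ)} (hA : MeasurableSet A) (hA' : ∀ x ∈ A, ∀ i, 0 ≤ x i)
    (F : (ι → ℝ) → ℝ) :
    ∫ u in (fun x i => x i ^ 2) '' A, F u = ∫ x in A, (∏ i, 2 * x i) * F (fun i => x i ^ 2) := by
  have hinj : Set.InjOn (fun (x : ι → ℝ) i => x i ^ 2) A := fun x hx y hy hxy => funext fun i =>
    (pow_left_inj₀ (hA' x hx i) (hA' y hy i) two_ne_zero).1 (congrFun hxy i)
  rw [integral_image_eq_integral_abs_det_fderiv_smul volume hA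
    (fun x _ => (hasFDerivAt_sq_pi x).hasFDerivWithinAt) hinj]
  refine setIntegral_congr_fun hA fun x hx => ?_
  rw [ContinuousLinearMap.det, LinearMap.coe_toContinuousLinearMap, LinearMap.det_toLin',
    Matrix.det_diagonal, abs_of_nonneg (Finset.prod_nonneg fun i _ => by linarith [hA' x hx i]),
    smul_eq_mul]

end Square

section Parity

variable {σ : Type*}

def HasParity (i : σ) (e : ℕ) (p : MvPolynomial σ ℝ) : Prop :=
  ∀ d ∈ p.support, d i % 2 = e % 2

def parityPart (i : σ) (e : ℕ) (p : MvPolynomial σ ℝ) : MvPolynomial σ ℝ :=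
  ∑ d ∈ p.support with d i % 2 = e % 2, monomial d (coeff d p)

lemma coeff_parityPart (i : σ) (e : ℕ) (p : MvPolynomial σ ℝ) (d : σ →₀ ℕ) :
    coeff d (parityPart i e p) = if d i % 2 = e % 2 then coeff d p else 0 := by
  classical
  rw [parityPart, coeff_sum]
  simp only [coeff_monomial]
  rw [Finset.sum_ite_eq']
  by_cases hd : d ∈ p.support <;> by_cases he : d i % 2 = e % 2 <;>
    simp_all [Finset.mem_filter]

lemma support_parityPart_subset (i : σ) (e : ℕ) (p : MvPolynomial σ ℝ) :
    (parityPart i e p).support ⊆ p.support := by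
  intro d hd
  rw [mem_support_iff, coeff_parityPart] at hd
  rw [mem_support_iff]
  split_ifs at hd
  exacts [hd, absurd rfl hd]

lemma totalDegree_parityPart_le (i : σ) (e : ℕ) (p : MvPolynomial σ ℝ) :
    (parityPart i e p).totalDegree ≤ p.totalDegree :=
  totalDegree_le_of_support_subset (support_parityPart_subset i e p)

lemma hasParity_parityPart (i : σ) (e : ℕ) (p : MvPolynomial σ ℝ) :
    HasParity i e (parityPart i e p) := by
  intro d hd
  rw [mem_support_iff, coeff_parityPart] at hd
  split_ifs at hd with h
  exacts [h, absurd rfl hd]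

lemma HasParity.parityPart {i : σ} {e : ℕ} {p : MvPolynomial σ ℝ} (hp : HasParity i e p)
    (j : σ) (e' : ℕ) : HasParity i e (parityPart j e' p) :=
  fun d hd => hp d (support_parityPart_subset j e' p hd)

lemma parityPart_add_parityPart {e e' : ℕ} (he : e % 2 ≠ e' % 2) (i : σ) (p : MvPolynomial σ ℝ) :
    parityPart i e p + parityPart i e' p = p := by
  ext d
  rw [coeff_add, coeff_parityPart, coeff_parityPart]
  split_ifs <;> first | omega | simp

lemma parityPart_eq_self {i : σ} {e : ℕ} {p : MvPolynomial σ ℝ} (hp : HasParity i e p) :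
    parityPart i e p = p := by
  ext d
  rw [coeff_parityPart]
  split_ifs with h
  · rfl
  · exact (notMem_support_iff.1 fun hd => h (hp d hd)).symm

lemma HasParity.eq_zero_of_totalDegree_lt {i : σ} {e : ℕ} {p : MvPolynomial σ ℝ}
    (hp : HasParity i e p) (hdeg : p.totalDegree < e % 2) : p = 0 := by
  refine support_eq_empty.1 (Finset.eq_empty_of_forall_notMem fun d hd => ?_)
  have := (monomial_le_degreeOf i hd).trans (degreeOf_le_totalDegree p i)
  have := hp d hd
  omega

variable [DecidableEq σ] [Fintype σ]

lemma HasParity.eval_reflect {i : σ} {e : ℕ} {p : MvPolynomial σ ℝ} (hp : HasParity i e p)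
    (x : σ → ℝ) : eval (reflect i x) p = (-1) ^ e * eval x p := by
  rw [eval_eq', eval_eq', Finset.mul_sum]
  refine Finset.sum_congr rfl fun d hd => ?_
  have hpow : (-1 : ℝ) ^ d i = (-1) ^ e := by
    rw [neg_one_pow_eq_pow_mod_two, hp d hd, ← neg_one_pow_eq_pow_mod_two]
  have hrest : ∀ j ∈ Finset.univ.erase i, reflect i x j ^ d j = x j ^ d j := fun j hj => by
    rw [reflect_apply_of_ne (Finset.ne_of_mem_erase hj)]
  rw [← Finset.mul_prod_erase _ _ (Finset.mem_univ i),
    ← Finset.mul_prod_erase _ _ (Finset.mem_univ i), reflect_apply_self, neg_pow, hpow,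
    Finset.prod_congr rfl hrest]
  ring

lemma hasParity_of_eval_reflect {i : σ} {e : ℕ} {p : MvPolynomial σ ℝ}
    (hp : ∀ x, eval (reflect i x) p = (-1) ^ e * eval x p) : HasParity i e p := by
  have hodd : parityPart i (e + 1) p = 0 := MvPolynomial.funext fun x => by
    have h := hp x
    rw [← parityPart_add_parityPart (by omega : e % 2 ≠ (e + 1) % 2) i p, eval_add, eval_add,
      (hasParity_parityPart i e p).eval_reflect, (hasParity_parityPart i (e + 1) p).eval_reflect,
      pow_succ] at h
    have : (-1 : ℝ) ^ e ≠ 0 := pow_ne_zero _ (by norm_num)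
    rw [map_zero]
    apply mul_left_cancel₀ this
    linarith
  rw [← parityPart_add_parityPart (by omega : e % 2 ≠ (e + 1) % 2) i p, hodd, add_zero]
  exact hasParity_parityPart i e _

lemma HasParity.eval_reflect_mul {i : σ} {e : ℕ} {p q : MvPolynomial σ ℝ} (hp : HasParity i e p)
    (hq : HasParity i e q) (x : σ → ℝ) :
    eval (reflect i x) p * eval (reflect i x) q = eval x p * eval x q := by
  rw [hp.eval_reflect, hq.eval_reflect, mul_mul_mul_comm, ← mul_pow, neg_one_mul, neg_neg, one_pow,
    one_mul]

end Parity

section Form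

variable {m : ℕ} {W : (Fin m → ℝ) → ℝ} {D : Set (Fin m → ℝ)}

lemma integrableOn_eval_mul_eval
    (hW : ∀ q : MvPolynomial (Fin m) ℝ, IntegrableOn (fun x => eval x q * W x) D)
    (p q : MvPolynomial (Fin m) ℝ) : IntegrableOn (fun x => eval x p * eval x q * W x) D := by
  simpa using hW (p * q)

def momentForm (W : (Fin m → ℝ) → ℝ) (D : Set (Fin m → ℝ))
    (hW : ∀ q : MvPolynomial (Fin m) ℝ, IntegrableOn (fun x => eval x q * W x) D) :
    LinearMap.BilinForm ℝ (MvPolynomial (Fin m) ℝ) :=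
  LinearMap.mk₂ ℝ (fun p q => wip W D (fun x => eval x p) (fun x => eval x q))
    (fun p p' q => by
      simp only [wip, eval_add, add_mul]
      exact integral_add (integrableOn_eval_mul_eval hW p q) (integrableOn_eval_mul_eval hW p' q))
    (fun c p q => by
      simp only [wip, smul_eval, smul_eq_mul, mul_assoc, integral_const_mul])
    (fun p q q' => by
      simp only [wip, eval_add, mul_add, add_mul]
      exact integral_add (integrableOn_eval_mul_eval hW p q) (integrableOn_eval_mul_eval hW p q'))
    (fun c p q => by
      simp only [wip, smul_eval, smul_eq_mul]
      rw [← integral_const_mul]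
      congr 1
      ext x
      ring)

variable (hW : ∀ q : MvPolynomial (Fin m) ℝ, IntegrableOn (fun x => eval x q * W x) D)

lemma momentForm_apply (p q : MvPolynomial (Fin m) ℝ) :
    momentForm W D hW p q = wip W D (fun x => eval x p) (fun x => eval x q) := rfl

lemma momentForm_comm (p q : MvPolynomial (Fin m) ℝ) :
    momentForm W D hW p q = momentForm W D hW q p := by
  simp only [momentForm_apply, wip, mul_comm (eval _ p)]

variable {i : Fin m} (hD : ∀ x ∈ D, reflect i x ∈ D) (hWi : ∀ x, W (reflect i x) = W x)
include hW hD hWi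

lemma momentForm_eq_zero_of_hasParity {e e' : ℕ} (he : e % 2 ≠ e' % 2)
    {p q : MvPolynomial (Fin m) ℝ} (hp : HasParity i e p) (hq : HasParity i e' q) :
    momentForm W D hW p q = 0 := by
  have hsign : (-1 : ℝ) ^ e * (-1) ^ e' = -1 := by
    rw [← pow_add, Odd.neg_one_pow (Nat.odd_iff.2 (by omega))]
  refine setIntegral_eq_zero_of_reflect i hD fun x => ?_
  dsimp only
  rw [hp.eval_reflect, hq.eval_reflect, hWi]
  linear_combination (eval x p * eval x q * W x) * hsign

lemma momentForm_parityPart (e : ℕ) (p q : MvPolynomial (Fin m) ℝ) :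
    momentForm W D hW (parityPart i e p) q = momentForm W D hW p (parityPart i e q) := by
  have hcross : ∀ p q : MvPolynomial (Fin m) ℝ,
      momentForm W D hW (parityPart i e p) (parityPart i (e + 1) q) = 0 := fun p q =>
    momentForm_eq_zero_of_hasParity hW hD hWi (by omega) (hasParity_parityPart i e p)
      (hasParity_parityPart i (e + 1) q)
  conv_lhs => rw [← parityPart_add_parityPart (by omega : e % 2 ≠ (e + 1) % 2) i q]
  conv_rhs => rw [← parityPart_add_parityPart (by omega : e % 2 ≠ (e + 1) % 2) i p]
  rw [map_add, LinearMap.map_add₂, hcross, momentForm_comm hW (parityPart i (e + 1) p), hcross]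

lemma parityPart_mem_Vsp {n : ℕ} (e : ℕ) {p : MvPolynomial (Fin m) ℝ} (hp : p ∈ Vsp n W D) :
    parityPart i e p ∈ Vsp n W D :=
  ⟨(totalDegree_parityPart_le i e p).trans hp.1, fun q hq => by
    rw [← momentForm_apply hW, momentForm_parityPart hW hD hWi]
    exact hp.2 _ ((totalDegree_parityPart_le i e q).trans_lt hq)⟩

end Form

lemma LinearMap.BilinForm.eq_zero_of_mem_span_of_orthonormal {K M ι : Type*} [Field K]
    [DecidableEq ι] [AddCommGroup M] [Module K M] (B : LinearMap.BilinForm K M) {v : ι → M}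
    {s : Set ι} (hv : ∀ i ∈ s, ∀ j ∈ s, B (v i) (v j) = if i = j then 1 else 0) {p : M}
    (hp : p ∈ Submodule.span K (v '' s)) (h : ∀ i ∈ s, B p (v i) = 0) : p = 0 := by
  obtain ⟨l, hl, rfl⟩ := (Finsupp.mem_span_image_iff_linearCombination K).1 hp
  suffices l = 0 by simp [this]
  ext i
  by_cases hi : i ∈ s
  · rw [Finsupp.coe_zero, Pi.zero_apply, ← h i hi, Finsupp.linearCombination_apply, Finsupp.sum,
      LinearMap.map_sum₂, Finset.sum_eq_single i]
    · simp [hv i hi i hi]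
    · intro j hj hji
      simp [hv j (hl hj) i hi, hji]
    · intro hi'
      simp [Finsupp.notMem_support_iff.1 hi']
  · exact Finsupp.notMem_support_iff.1 fun h' => hi (hl h')

section Bivariate

lemma vec_fin_two_eta (x : Fin 2 → ℝ) : ![x 0, x 1] = x := FinVec.etaExpand_eq x

lemma reflect_zero_fin_two (x : Fin 2 → ℝ) : reflect 0 x = ![-x 0, x 1] := by
  funext j; fin_cases j <;> simp [reflect]

lemma reflect_one_fin_two (x : Fin 2 → ℝ) : reflect 1 x = ![x 0, -x 1] := by
  funext j; fin_cases j <;> simp [reflect]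

lemma hasParity_zero_iff_eval_neg {e : ℕ} {p : MvPolynomial (Fin 2) ℝ} :
    HasParity 0 e p ↔ ∀ s t : ℝ, eval ![-s, t] p = (-1) ^ e * eval ![s, t] p := by
  refine ⟨fun hp s t => ?_, fun hp => hasParity_of_eval_reflect fun x => ?_⟩
  · simpa [reflect_zero_fin_two] using hp.eval_reflect ![s, t]
  · simpa [reflect_zero_fin_two, vec_fin_two_eta] using hp (x 0) (x 1)

lemma VspE2_eq (n : ℕ) (W : (Fin 2 → ℝ) → ℝ) (D : Set (Fin 2 → ℝ)) :
    VspE2 n W D = {p | p ∈ Vsp n W D ∧ HasParity 0 0 p} := by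
  simp [VspE2, hasParity_zero_iff_eval_neg]

lemma VspO2_eq (n : ℕ) (W : (Fin 2 → ℝ) → ℝ) (D : Set (Fin 2 → ℝ)) :
    VspO2 n W D = {p | p ∈ Vsp n W D ∧ HasParity 0 1 p} := by
  simp [VspO2, hasParity_zero_iff_eval_neg]

lemma eq_zero_of_mem_VspO2_zero {W : (Fin 2 → ℝ) → ℝ} {D : Set (Fin 2 → ℝ)}
    {p : MvPolynomial (Fin 2) ℝ} (hp : p ∈ VspO2 0 W D) : p = 0 := by
  rw [VspO2_eq] at hp
  exact hp.2.eq_zero_of_totalDegree_lt (by have := hp.1.1; omega)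

/-- The set `√Ω` of the paper. -/
def sqrtDomain (Ω : Set (Fin 2 → ℝ)) : Set (Fin 2 → ℝ) :=
  {p | ∃ s t : ℝ, 0 ≤ s ∧ 0 ≤ t ∧ ![s, t] ∈ Ω ∧ p = ![s ^ 2, t ^ 2]}

/-- The weight `w_{ε,δ}` of the paper, for `w` written as a function `W` of the point. -/
def sqrtWeight (W : (Fin 2 → ℝ) → ℝ) (ε δ : ℝ) (u : Fin 2 → ℝ) : ℝ :=
  u 0 ^ ε * u 1 ^ δ * W (fun i => √(u i))

def liftSq (a b : ℕ) : MvPolynomial (Fin 2) ℝ →ₗ[ℝ] MvPolynomial (Fin 2) ℝ :=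
  LinearMap.mulLeft ℝ (X 0 ^ a * X 1 ^ b) ∘ₗ (expand 2).toLinearMap

lemma liftSq_apply (a b : ℕ) (f : MvPolynomial (Fin 2) ℝ) :
    liftSq a b f = X 0 ^ a * X 1 ^ b * sub2 f := rfl

lemma eval_liftSq (a b : ℕ) (f : MvPolynomial (Fin 2) ℝ) (x : Fin 2 → ℝ) :
    eval x (liftSq a b f) = x 0 ^ a * x 1 ^ b * eval (fun i => x i ^ 2) f := by
  rw [liftSq_apply, eval_mul, eval_mul, eval_pow, eval_pow, eval_X, eval_X, sub2, ← expand,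
    eval_expand]
  rfl

lemma liftSq_monomial (a b : ℕ) (d : Fin 2 →₀ ℕ) (c : ℝ) :
    liftSq a b (monomial d c) = monomial (Finsupp.single 0 a + Finsupp.single 1 b + 2 • d) c := by
  simp [liftSq, X_pow_eq_monomial, monomial_mul]

lemma totalDegree_liftSq (a b : ℕ) {f : MvPolynomial (Fin 2) ℝ} (hf : f ≠ 0) :
    (liftSq a b f).totalDegree = 2 * f.totalDegree + a + b := by
  have hX : ∀ (i : Fin 2) (n : ℕ), (X i ^ n : MvPolynomial (Fin 2) ℝ) ≠ 0 :=
    fun i n => pow_ne_zero _ (X_ne_zero i)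
  rw [liftSq_apply, sub2, ← expand, totalDegree_mul_of_isDomain (mul_ne_zero (hX 0 a) (hX 1 b))
    ((expand_ne_zero two_pos).2 hf), totalDegree_mul_of_isDomain (hX 0 a) (hX 1 b),
    totalDegree_X_pow, totalDegree_X_pow, totalDegree_expand]
  ring

lemma totalDegree_liftSq_le (a b : ℕ) (f : MvPolynomial (Fin 2) ℝ) :
    (liftSq a b f).totalDegree ≤ 2 * f.totalDegree + a + b := by
  rcases eq_or_ne f 0 with rfl | hf
  · simp
  · exact (totalDegree_liftSq a b hf).le

lemma hasParity_zero_liftSq (a b : ℕ) (f : MvPolynomial (Fin 2) ℝ) :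
    HasParity 0 a (liftSq a b f) :=
  hasParity_of_eval_reflect fun x => by
    rw [eval_liftSq, eval_liftSq, reflect_sq, reflect_apply_self,
      reflect_apply_of_ne (by decide : (1 : Fin 2) ≠ 0), neg_pow]
    ring

lemma hasParity_one_liftSq (a b : ℕ) (f : MvPolynomial (Fin 2) ℝ) :
    HasParity 1 b (liftSq a b f) :=
  hasParity_of_eval_reflect fun x => by
    rw [eval_liftSq, eval_liftSq, reflect_sq, reflect_apply_self,
      reflect_apply_of_ne (by decide : (0 : Fin 2) ≠ 1), neg_pow]
    ring

lemma mem_range_liftSq {a b : ℕ} (ha : a ≤ 1) (hb : b ≤ 1) {p : MvPolynomial (Fin 2) ℝ}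
    (h0 : HasParity 0 a p) (h1 : HasParity 1 b p) : p ∈ LinearMap.range (liftSq a b) := by
  rw [p.as_sum]
  refine Submodule.sum_mem _ fun d hd =>
    ⟨monomial (d.mapRange (· / 2) (Nat.zero_div 2)) (coeff d p), ?_⟩
  rw [liftSq_monomial]
  congr 2
  have := h0 d hd
  have := h1 d hd
  ext i
  fin_cases i <;> simp <;> omega

lemma liftSq_mem_span {a b : ℕ} {ι : Type*} {v : ι → MvPolynomial (Fin 2) ℝ} {s : Set ι}
    {r : MvPolynomial (Fin 2) ℝ} (hr : r ∈ Submodule.span ℝ (v '' s)) :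
    liftSq a b r ∈ Submodule.span ℝ ((fun j => liftSq a b (v j)) '' s) := by
  have := Submodule.mem_map_of_mem (f := liftSq a b) hr
  rwa [Submodule.map_span, ← Set.image_comp] at this

lemma sqrtDomain_ae_eq (Ω : Set (Fin 2 → ℝ)) :
    sqrtDomain Ω =ᵐ[volume]
      ((fun x i => x i ^ 2) '' (Ω ∩ {x | 0 < x 0} ∩ {x | 0 < x 1}) : Set (Fin 2 → ℝ)) := by
  have himage : (fun x i => x i ^ 2) '' (Ω ∩ {x | 0 < x 0} ∩ {x | 0 < x 1}) ⊆ sqrtDomain Ω := by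
    rintro _ ⟨x, ⟨⟨hx, h0⟩, h1⟩, rfl⟩
    refine ⟨x 0, x 1, h0.le, h1.le, by rwa [vec_fin_two_eta], ?_⟩
    funext i; fin_cases i <;> rfl
  have haxes : sqrtDomain Ω \ (fun x i => x i ^ 2) '' (Ω ∩ {x | 0 < x 0} ∩ {x | 0 < x 1}) ⊆
      {x | x 0 = 0} ∪ {x | x 1 = 0} := by
    rintro _ ⟨⟨s, t, hs, ht, hst, rfl⟩, hn⟩
    by_contra hne
    simp only [Set.mem_union, Set.mem_ofPred_eq, Matrix.cons_val_zero, Matrix.cons_val_one,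
      pow_eq_zero_iff two_ne_zero, not_or] at hne
    refine hn ⟨![s, t], ⟨⟨hst, ?_⟩, ?_⟩, ?_⟩
    · simpa using lt_of_le_of_ne hs (Ne.symm hne.1)
    · simpa using lt_of_le_of_ne ht (Ne.symm hne.2)
    · funext i; fin_cases i <;> rfl
  refine ae_eq_set.2 ⟨measure_mono_null haxes (measure_union_null (volume_coord_eq_zero 0)
    (volume_coord_eq_zero 1)), by rw [Set.sdiff_eq_empty.2 himage]; simp⟩

lemma MeasurableSet.inter_quadrant {Ω : Set (Fin 2 → ℝ)} (hΩ : MeasurableSet Ω) :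
    MeasurableSet (Ω ∩ {x | 0 < x 0} ∩ {x | 0 < x 1}) :=
  (hΩ.inter (measurableSet_lt measurable_const (measurable_pi_apply 0))).inter
    (measurableSet_lt measurable_const (measurable_pi_apply 1))

lemma setIntegral_sqrtDomain {Ω : Set (Fin 2 → ℝ)} (hΩ : MeasurableSet Ω) (F : (Fin 2 → ℝ) → ℝ) :
    ∫ u in sqrtDomain Ω, F u =
      ∫ x in Ω ∩ {x | 0 < x 0} ∩ {x | 0 < x 1}, (∏ i, 2 * x i) * F (fun i => x i ^ 2) := by
  rw [setIntegral_congr_set (sqrtDomain_ae_eq Ω)]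
  refine setIntegral_image_sq hΩ.inter_quadrant (fun x hx i => ?_) F
  fin_cases i
  exacts [hx.1.2.le, hx.2.le]

lemma rpow_sq_sub_half {y : ℝ} (hy : 0 < y) (a : ℕ) :
    (y ^ 2) ^ ((a : ℝ) - 1 / 2) = y ^ (2 * a) / y := by
  rw [Real.rpow_sub (by positivity), Real.rpow_natCast, ← Real.sqrt_eq_rpow, Real.sqrt_sq hy.le,
    pow_mul]

variable {Ω : Set (Fin 2 → ℝ)} {W : (Fin 2 → ℝ) → ℝ}
  (hΩ : MeasurableSet Ω) (hΩr : ∀ i, ∀ x ∈ Ω, reflect i x ∈ Ω) (hWr : ∀ i x, W (reflect i x) = W x)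
  (hmom : ∀ q : MvPolynomial (Fin 2) ℝ, IntegrableOn (fun x => eval x q * W x) Ω)
include hΩ hΩr hWr hmom

lemma wip_sqrtDomain_eq_momentForm (a b : ℕ) (F G : MvPolynomial (Fin 2) ℝ) :
    wip (sqrtWeight W (a - 1 / 2) (b - 1 / 2)) (sqrtDomain Ω) (fun u => eval u F)
      (fun u => eval u G) = momentForm W Ω hmom (liftSq a b F) (liftSq a b G) := by
  set H : (Fin 2 → ℝ) → ℝ := fun x => eval x (liftSq a b F) * eval x (liftSq a b G) * W x
  have hH : ∀ i x, H (reflect i x) = H x := Fin.forall_fin_two.2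
    ⟨fun x => by simp only [H, hWr, (hasParity_zero_liftSq a b F).eval_reflect_mul
        (hasParity_zero_liftSq a b G)],
      fun x => by simp only [H, hWr, (hasParity_one_liftSq a b F).eval_reflect_mul
        (hasParity_one_liftSq a b G)]⟩
  have hHi : IntegrableOn H Ω := integrableOn_eval_mul_eval hmom _ _
  have hΩ₀r : ∀ x ∈ Ω ∩ {x | 0 < x 0}, reflect 1 x ∈ Ω ∩ {x | 0 < x 0} := fun x hx =>
    ⟨hΩr 1 x hx.1, by simpa [reflect_apply_of_ne (by decide : (0 : Fin 2) ≠ 1)] using hx.2⟩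
  rw [momentForm_apply]
  change _ = ∫ x in Ω, H x
  rw [setIntegral_eq_two_mul_of_reflect 0 (hΩr 0) hHi (hH 0),
    setIntegral_eq_two_mul_of_reflect 1 hΩ₀r (hHi.mono_set Set.inter_subset_left) (hH 1), wip,
    setIntegral_sqrtDomain hΩ, ← mul_assoc, ← integral_const_mul]
  refine setIntegral_congr_fun hΩ.inter_quadrant fun x hx => ?_
  have h0 : 0 < x 0 := hx.1.2
  have h1 : 0 < x 1 := hx.2
  have hsqrt : (fun i => √(x i ^ 2)) = x := by
    funext i; fin_cases i
    exacts [Real.sqrt_sq h0.le, Real.sqrt_sq h1.le]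
  simp only [H, sqrtWeight, eval_liftSq, hsqrt, rpow_sq_sub_half h0, rpow_sq_sub_half h1,
    Fin.prod_univ_two]
  field_simp
  ring

lemma mem_Vsp_sqrtWeight_of_liftSq_mem {a b n K : ℕ} {r : MvPolynomial (Fin 2) ℝ}
    (h : liftSq a b r ∈ Vsp n W Ω) (hK : r.totalDegree ≤ K) (hn : 2 * K + a + b ≤ n) :
    r ∈ Vsp K (sqrtWeight W (a - 1 / 2) (b - 1 / 2)) (sqrtDomain Ω) :=
  ⟨hK, fun y hy => by
    rw [wip_sqrtDomain_eq_momentForm hΩ hΩr hWr hmom]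
    exact h.2 _ ((totalDegree_liftSq_le a b y).trans_lt (by omega))⟩

lemma liftSq_mem_Vsp {a b k n : ℕ} (ha : a ≤ 1) (hb : b ≤ 1) (hn : n = 2 * k + a + b)
    {r : MvPolynomial (Fin 2) ℝ}
    (hr : r ∈ Vsp k (sqrtWeight W (a - 1 / 2) (b - 1 / 2)) (sqrtDomain Ω)) :
    liftSq a b r ∈ Vsp n W Ω := by
  refine ⟨(totalDegree_liftSq_le a b r).trans (by have := hr.1; omega), fun q hq => ?_⟩
  set B := momentForm W Ω hmom
  set q' := parityPart 1 b (parityPart 0 a q)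
  have hB : B (liftSq a b r) q = B (liftSq a b r) q' := by
    rw [← momentForm_parityPart hmom (hΩr 1) (hWr 1),
      parityPart_eq_self (hasParity_one_liftSq a b r),
      ← momentForm_parityPart hmom (hΩr 0) (hWr 0),
      parityPart_eq_self (hasParity_zero_liftSq a b r)]
  obtain ⟨g, hg⟩ : q' ∈ LinearMap.range (liftSq a b) := mem_range_liftSq ha hb
    ((hasParity_parityPart 0 a q).parityPart 1 b) (hasParity_parityPart 1 b _)
  have hq' : q'.totalDegree ≤ q.totalDegree :=
    (totalDegree_parityPart_le _ _ _).trans (totalDegree_parityPart_le _ _ _)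
  change B (liftSq a b r) q = 0
  rw [hB, ← hg]
  rcases eq_or_ne g 0 with rfl | hg0
  · rw [map_zero, map_zero]
  have := totalDegree_liftSq a b hg0
  rw [hg] at this
  rw [← wip_sqrtDomain_eq_momentForm hΩ hΩr hWr hmom]
  exact hr.2 g (by omega)

variable {a b : ℕ} (ha : a ≤ 1) (hb : b ≤ 1) {P : ℕ → ℕ → MvPolynomial (Fin 2) ℝ}
  (hP : ∀ k, IsONBasisFor (Set.Iic k) (P k)
    (Vsp k (sqrtWeight W (a - 1 / 2) (b - 1 / 2)) (sqrtDomain Ω))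
    (sqrtWeight W (a - 1 / 2) (b - 1 / 2)) (sqrtDomain Ω))
include ha hb hP

lemma eq_zero_of_mem_Vsp_of_hasParity {n : ℕ} (hn : n % 2 ≠ (a + b) % 2)
    {p : MvPolynomial (Fin 2) ℝ} (hp : p ∈ Vsp n W Ω) (h0 : HasParity 0 a p)
    (h1 : HasParity 1 b p) : p = 0 := by
  obtain ⟨g, rfl⟩ := mem_range_liftSq ha hb h0 h1
  rcases eq_or_ne g 0 with rfl | hg
  · exact map_zero _
  set K := g.totalDegree
  have hK : 2 * K + a + b < n := by
    have := totalDegree_liftSq a b hg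
    have := hp.1
    omega
  obtain ⟨hmem, horth, hspan⟩ := hP K
  refine (momentForm W Ω hmom).eq_zero_of_mem_span_of_orthonormal (fun i hi j hj => ?_)
    (liftSq_mem_span (hspan g (mem_Vsp_sqrtWeight_of_liftSq_mem hΩ hΩr hWr hmom hp le_rfl hK.le)))
    fun j hj => hp.2 _ ((totalDegree_liftSq_le a b _).trans_lt (by have := (hmem j hj).1; omega))
  rw [← wip_sqrtDomain_eq_momentForm hΩ hΩr hWr hmom]
  exact horth i hi j hj

lemma mem_span_liftSq_of_hasParity {k n : ℕ} (hn : n = 2 * k + a + b) {p : MvPolynomial (Fin 2) ℝ}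
    (hp : p ∈ Vsp n W Ω) (h0 : HasParity 0 a p) (h1 : HasParity 1 b p) :
    p ∈ Submodule.span ℝ ((fun j => liftSq a b (P k j)) '' Set.Iic k) := by
  obtain ⟨r, rfl⟩ := mem_range_liftSq ha hb h0 h1
  have hr : r.totalDegree ≤ k := by
    rcases eq_or_ne r 0 with rfl | hr
    · simp
    have := totalDegree_liftSq a b hr
    have := hp.1
    omega
  exact liftSq_mem_span ((hP k).2.2 r (mem_Vsp_sqrtWeight_of_liftSq_mem hΩ hΩr hWr hmom hp hr
    (by omega)))

theorem isONBasisFor_liftSq {b' : ℕ} (hb' : b + b' = 1) {P' : ℕ → ℕ → MvPolynomial (Fin 2) ℝ}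
    (hP' : ∀ k, IsONBasisFor (Set.Iic k) (P' k)
      (Vsp k (sqrtWeight W (a - 1 / 2) (b' - 1 / 2)) (sqrtDomain Ω))
      (sqrtWeight W (a - 1 / 2) (b' - 1 / 2)) (sqrtDomain Ω))
    {k n : ℕ} (hn : n = 2 * k + a + b) :
    IsONBasisFor (Set.Iic k) (fun j => liftSq a b (P k j))
      {p | p ∈ Vsp n W Ω ∧ HasParity 0 a p} W Ω := by
  refine ⟨fun j hj => ⟨liftSq_mem_Vsp hΩ hΩr hWr hmom ha hb hn ((hP k).1 j hj),
    hasParity_zero_liftSq a b _⟩, fun i hi j hj => ?_, fun p ⟨hp, h0⟩ => ?_⟩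
  · rw [← momentForm_apply hmom, ← wip_sqrtDomain_eq_momentForm hΩ hΩr hWr hmom]
    exact (hP k).2.1 i hi j hj
  have hzero : parityPart 1 b' p = 0 :=
    eq_zero_of_mem_Vsp_of_hasParity hΩ hΩr hWr hmom ha (by omega) hP' (n := n) (by omega)
      (parityPart_mem_Vsp hmom (hΩr 1) (hWr 1) b' hp) (h0.parityPart 1 b')
      (hasParity_parityPart 1 b' p)
  rw [← parityPart_add_parityPart (by omega : b % 2 ≠ b' % 2) 1 p, hzero, add_zero]
  exact mem_span_liftSq_of_hasParity hΩ hΩr hWr hmom ha hb hP hn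
    (parityPart_mem_Vsp hmom (hΩr 1) (hWr 1) b hp) (h0.parityPart 1 b) (hasParity_parityPart 1 b p)

end Bivariate

/-- on a fully symmetric domain, orthonormal bases of the spaces of
orthogonal polynomials even/odd in the first variable are obtained from orthonormal
bases on `√Ω` for the four weights `w_{±1/2,±1/2}`. -/
theorem stmt8 (Ω : Set (Fin 2 → ℝ)) (hΩm : MeasurableSet Ω)
    (hΩsym : ∀ p ∈ Ω, ![-(p 0), p 1] ∈ Ω ∧ ![p 0, -(p 1)] ∈ Ω)
    (w : ℝ → ℝ → ℝ)
    (hwsym : ∀ s t : ℝ, w (-s) t = w s t ∧ w s (-t) = w s t)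
    (hmom : ∀ q : MvPolynomial (Fin 2) ℝ,
      IntegrableOn (fun p => eval p q * w (p 0) (p 1)) Ω volume)
    -- `√Ω`
    (sqrtΩ : Set (Fin 2 → ℝ))
    (hsq : sqrtΩ = {p | ∃ s t : ℝ, 0 ≤ s ∧ 0 ≤ t ∧ ![s, t] ∈ Ω ∧ p = ![s ^ 2, t ^ 2]})
    -- the weights `w_{ε,δ}(u,v) = u^ε v^δ w(√u, √v)` on `√Ω`
    (wE : ℝ → ℝ → (Fin 2 → ℝ) → ℝ)
    (hwE : ∀ e f : ℝ, wE e f =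
      fun p => p 0 ^ e * p 1 ^ f * w (Real.sqrt (p 0)) (Real.sqrt (p 1)))
    -- orthonormal bases on `√Ω` for the four sign choices
    (Pmm Pmp Ppm Ppp : ℕ → ℕ → MvPolynomial (Fin 2) ℝ)
    (hPmm : ∀ m : ℕ, IsONBasisFor (Set.Iic m) (Pmm m)
      (Vsp m (wE (-(1 / 2)) (-(1 / 2))) sqrtΩ) (wE (-(1 / 2)) (-(1 / 2))) sqrtΩ)
    (hPmp : ∀ m : ℕ, IsONBasisFor (Set.Iic m) (Pmp m)
      (Vsp m (wE (-(1 / 2)) (1 / 2)) sqrtΩ) (wE (-(1 / 2)) (1 / 2)) sqrtΩ)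
    (hPpm : ∀ m : ℕ, IsONBasisFor (Set.Iic m) (Ppm m)
      (Vsp m (wE (1 / 2) (-(1 / 2))) sqrtΩ) (wE (1 / 2) (-(1 / 2))) sqrtΩ)
    (hPpp : ∀ m : ℕ, IsONBasisFor (Set.Iic m) (Ppp m)
      (Vsp m (wE (1 / 2) (1 / 2)) sqrtΩ) (wE (1 / 2) (1 / 2)) sqrtΩ)
    (WΩ : (Fin 2 → ℝ) → ℝ) (hWΩ : WΩ = fun p => w (p 0) (p 1)) :
    -- `P_j^{2m}(w; u, v) = P_{j,m}(w_{-1/2,-1/2}; u², v²)`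
    (∀ m : ℕ, IsONBasisFor (Set.Iic m) (fun j => sub2 (Pmm m j))
      (VspE2 (2 * m) WΩ Ω) WΩ Ω) ∧
    -- `P_j^{2m+1}(w; u, v) = v · P_{j,m}(w_{-1/2,1/2}; u², v²)`
    (∀ m : ℕ, IsONBasisFor (Set.Iic m) (fun j => X 1 * sub2 (Pmp m j))
      (VspE2 (2 * m + 1) WΩ Ω) WΩ Ω) ∧
    -- `Q_j^{2m}(w; u, v) = u v · P_{j,m-1}(w_{1/2,1/2}; u², v²)`, `0 ≤ j ≤ m-1`
    (∀ m : ℕ, IsONBasisFor (Set.Iio m) (fun j => X 0 * X 1 * sub2 (Ppp (m - 1) j))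
      (VspO2 (2 * m) WΩ Ω) WΩ Ω) ∧
    -- `Q_j^{2m+1}(w; u, v) = u · P_{j,m}(w_{1/2,-1/2}; u², v²)`
    (∀ m : ℕ, IsONBasisFor (Set.Iic m) (fun j => X 0 * sub2 (Ppm m j))
      (VspO2 (2 * m + 1) WΩ Ω) WΩ Ω) := by
  subst hWΩ hsq
  obtain rfl : wE = sqrtWeight fun p => w (p 0) (p 1) := funext₂ hwE
  have hΩr : ∀ i, ∀ x ∈ Ω, reflect i x ∈ Ω := Fin.forall_fin_two.2
    ⟨fun x hx => reflect_zero_fin_two x ▸ (hΩsym x hx).1,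
      fun x hx => reflect_one_fin_two x ▸ (hΩsym x hx).2⟩
  have hWr : ∀ (i : Fin 2) (x : Fin 2 → ℝ), w (reflect i x 0) (reflect i x 1) = w (x 0) (x 1) := by
    intro i x
    fin_cases i <;> simp [hwsym]
  have e₀ : ((0 : ℕ) : ℝ) - 1 / 2 = -(1 / 2) := by norm_num
  have e₁ : ((1 : ℕ) : ℝ) - 1 / 2 = 1 / 2 := by norm_num
  refine ⟨fun m => ?_, fun m => ?_, fun m => ?_, fun m => ?_⟩
  · simpa only [VspE2_eq, liftSq_apply, pow_zero, one_mul] using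
      isONBasisFor_liftSq hΩm hΩr hWr hmom (a := 0) (b := 0) (b' := 1) zero_le_one zero_le_one
        (by rw [e₀]; exact hPmm) rfl (by rw [e₀, e₁]; exact hPmp) (by ring)
  · simpa only [VspE2_eq, liftSq_apply, pow_zero, pow_one, one_mul] using
      isONBasisFor_liftSq hΩm hΩr hWr hmom (a := 0) (b := 1) (b' := 0) zero_le_one le_rfl
        (by rw [e₀, e₁]; exact hPmp) rfl (by rw [e₀]; exact hPmm) (by ring)
  · cases m with
    | zero => exact ⟨by simp, by simp, fun p hp => eq_zero_of_mem_VspO2_zero hp ▸ zero_mem _⟩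
    | succ k =>
      simpa only [VspO2_eq, liftSq_apply, pow_one, Set.Iio_add_one_eq_Iic, Nat.add_sub_cancel] using
        isONBasisFor_liftSq hΩm hΩr hWr hmom (a := 1) (b := 1) (b' := 0) le_rfl le_rfl
          (by rw [e₁]; exact hPpp) rfl (by rw [e₀, e₁]; exact hPpm) (by ring)
  · simpa only [VspO2_eq, liftSq_apply, pow_zero, pow_one, mul_one] using
      isONBasisFor_liftSq hΩm hΩr hWr hmom (a := 1) (b := 0) (b' := 1) le_rfl zero_le_one
        (by rw [e₀, e₁]; exact hPpm) rfl (by rw [e₁]; exact hPpp) (by ring)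
end
end
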